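/- Let (x, s) ∈ K × K. If x ∘ s ∈ int(K), then (x, s) ∈ int(K) × int(K). In particular, if √2 ‖x ∘ s − νe‖ ≤ γν for some γ ∈ (0,1) and ν > 0, then (x, s) ∈ int(K) × int(K). -/

import Mathlib

open scoped BigOperators
open Matrix

namespace SOCP

/-- Index type for a block vector with `k` blocks, block `i` having dimension `d i + 1`. -/
abbrev Idx {k : ℕ} (d : Fin k → ℕ) : Type := (i : Fin k) × Fin (d i + 1)

/-- The `i`-th block of a block vector. -/
def blk {k : ℕ} {d : Fin k → ℕ} (v : Idx d → ℝ) (i : Fin k) : Fin (d i + 1) → ℝ :=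
  fun j => v ⟨i, j⟩

/-- Squared Euclidean norm of the tail `u_{2:m}` of a single block. -/
def tailNormSq {m : ℕ} (u : Fin (m + 1) → ℝ) : ℝ := ∑ j : Fin m, u j.succ ^ 2

/-- Euclidean norm of the tail `u_{2:m}` of a single block. -/
noncomputable def tailNorm {m : ℕ} (u : Fin (m + 1) → ℝ) : ℝ := Real.sqrt (tailNormSq u)

/-- Membership in the cone `K` (a direct product of second-order cones). -/
def inK {k : ℕ} {d : Fin k → ℕ} (v : Idx d → ℝ) : Prop :=
  ∀ i : Fin k, tailNorm (blk v i) ≤ v ⟨i, 0⟩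

/-- Membership in the interior of the cone `K`. -/
def inIntK {k : ℕ} {d : Fin k → ℕ} (v : Idx d → ℝ) : Prop :=
  ∀ i : Fin k, tailNorm (blk v i) < v ⟨i, 0⟩

/-- Euclidean inner product of vectors. -/
def dotV {ι : Type*} [Fintype ι] (u v : ι → ℝ) : ℝ := ∑ a, u a * v a

/-- Euclidean norm of a vector. -/
noncomputable def vnorm {ι : Type*} [Fintype ι] (v : ι → ℝ) : ℝ :=
  Real.sqrt (∑ a, v a ^ 2)

/-- Blockwise Jordan product. -/
def jmul {k : ℕ} {d : Fin k → ℕ} (u v : Idx d → ℝ) : Idx d → ℝ := fun a =>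
  if a.2 = 0 then ∑ j, u ⟨a.1, j⟩ * v ⟨a.1, j⟩
  else u ⟨a.1, 0⟩ * v a + v ⟨a.1, 0⟩ * u a

/-- The unit element `e` of the Jordan algebra. -/
def unitE {k : ℕ} {d : Fin k → ℕ} : Idx d → ℝ := fun a => if a.2 = 0 then 1 else 0

/-- `λ_min` of the `i`-th block. -/
noncomputable def lamMin {k : ℕ} {d : Fin k → ℕ} (v : Idx d → ℝ) (i : Fin k) : ℝ :=
  v ⟨i, 0⟩ - tailNorm (blk v i)

/-- `λ_max` of the `i`-th block. -/
noncomputable def lamMax {k : ℕ} {d : Fin k → ℕ} (v : Idx d → ℝ) (i : Fin k) : ℝ :=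
  v ⟨i, 0⟩ + tailNorm (blk v i)

/-- Arrow-head matrix of a single block. -/
def arrowBlk {m : ℕ} (u : Fin (m + 1) → ℝ) : Matrix (Fin (m + 1)) (Fin (m + 1)) ℝ :=
  Matrix.of fun j j' =>
    if j = 0 then u j' else if j' = 0 then u j else if j = j' then u 0 else 0

/-- Arrow-head matrix `mat(v)` (block diagonal). -/
def matV {k : ℕ} {d : Fin k → ℕ} (v : Idx d → ℝ) : Matrix (Idx d) (Idx d) ℝ :=
  Matrix.blockDiagonal' fun i => arrowBlk (blk v i)

/-- `β_u = sqrt(u_1^2 - ‖u_{2:m}‖^2)` for a single block. -/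
noncomputable def betaOf {m : ℕ} (u : Fin (m + 1) → ℝ) : ℝ :=
  Real.sqrt (u 0 ^ 2 - tailNormSq u)

/-- The matrix `T_u` for a single block. -/
noncomputable def Tblk {m : ℕ} (u : Fin (m + 1) → ℝ) :
    Matrix (Fin (m + 1)) (Fin (m + 1)) ℝ :=
  Matrix.of fun j j' =>
    if j = 0 then u j'
    else if j' = 0 then u j
    else (if j = j' then betaOf u else 0) + u j * u j' / (betaOf u + u 0)

/-- The matrix `T_x` (block diagonal). -/
noncomputable def TV {k : ℕ} {d : Fin k → ℕ} (x : Idx d → ℝ) :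
    Matrix (Idx d) (Idx d) ℝ :=
  Matrix.blockDiagonal' fun i => Tblk (blk x i)

/-- `w_{xs} = T_x s`. -/
noncomputable def wxs {k : ℕ} {d : Fin k → ℕ} (x s : Idx d → ℝ) : Idx d → ℝ :=
  (TV x).mulVec s

/-- Central-path coefficient `μ(x,s) = xᵀs/k`. -/
noncomputable def muV {k : ℕ} {d : Fin k → ℕ} (x s : Idx d → ℝ) : ℝ :=
  dotV x s / (k : ℝ)

/-- Central-path distance `d_2(x,s) = √2 ‖w_{xs} - μ e‖`. -/
noncomputable def d2 {k : ℕ} {d : Fin k → ℕ} (x s : Idx d → ℝ) : ℝ :=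
  Real.sqrt 2 * vnorm (wxs x s - muV x s • unitE)

/-- Central-path distance `d_∞(x,s)`. -/
noncomputable def dInf {k : ℕ} {d : Fin k → ℕ} (x s : Idx d → ℝ) : ℝ :=
  ⨆ i : Fin k, max |lamMax (wxs x s) i - muV x s| |lamMin (wxs x s) i - muV x s|

/-- The matrix `Q = diag(1, -I)` for a single block. -/
def Qblk {m : ℕ} : Matrix (Fin (m + 1)) (Fin (m + 1)) ℝ :=
  Matrix.of fun j j' => if j = j' then (if j = 0 then (1 : ℝ) else -1) else 0

/-- The scaling group `G` of block matrices `Θ G` with `(Gⁱ)ᵀ Qⁱ Gⁱ = Qⁱ`. -/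
def scalingGroup {k : ℕ} (d : Fin k → ℕ) : Set (Matrix (Idx d) (Idx d) ℝ) :=
  { D | ∃ (θ : Fin k → ℝ) (G : ∀ i, Matrix (Fin (d i + 1)) (Fin (d i + 1)) ℝ),
      (∀ i, 0 < θ i) ∧ (∀ i, (G i)ᵀ * Qblk * G i = Qblk) ∧
      D = Matrix.blockDiagonal' fun i => θ i • G i }

/-- Operator 2-norm of a matrix. -/
noncomputable def op2 {m n : Type*} [Fintype m] [Fintype n] [DecidableEq n]
    (M : Matrix m n ℝ) : ℝ :=
  ‖LinearMap.toContinuousLinearMap (Matrix.toEuclideanLin M)‖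

/-- `R_{xs} = T_x X⁻¹ S T_x`. -/
noncomputable def Rxs {k : ℕ} {d : Fin k → ℕ} (x s : Idx d → ℝ) :
    Matrix (Idx d) (Idx d) ℝ :=
  TV x * (matV x)⁻¹ * matV s * TV x

/-- The scaled Newton system of the infeasible IPM (Monteiro–Zhang family). -/
def NewtonSys {k p : ℕ} {d : Fin k → ℕ} (A : Matrix (Fin p) (Idx d) ℝ)
    (Cm : Matrix (Idx d) (Idx d) ℝ) (x : Idx d → ℝ) (y : Fin p → ℝ) (s : Idx d → ℝ)
    (ν : ℝ) (D : Matrix (Idx d) (Idx d) ℝ)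
    (dx : Idx d → ℝ) (dy : Fin p → ℝ) (ds : Idx d → ℝ) : Prop :=
  A.mulVec dx = -((1 - ν) • A.mulVec x) ∧
  Aᵀ.mulVec dy + Cm.mulVec dx + ds =
    -((1 - ν) • (Aᵀ.mulVec y + Cm.mulVec x + s)) ∧
  (matV ((D⁻¹)ᵀ.mulVec x)).mulVec (D.mulVec ds)
      + (matV (D.mulVec s)).mulVec ((D⁻¹)ᵀ.mulVec dx)
    = (ν * muV x s) • unitE - jmul ((D⁻¹)ᵀ.mulVec x) (D.mulVec s)

/-- Central-path neighborhood `N_2(γ)`. -/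
def N2 {k : ℕ} (d : Fin k → ℕ) (p : ℕ) (γ : ℝ) :
    Set ((Idx d → ℝ) × (Fin p → ℝ) × (Idx d → ℝ)) :=
  { z | inIntK z.1 ∧ inIntK z.2.2 ∧ d2 z.1 z.2.2 ≤ γ * muV z.1 z.2.2 }

/-- Central-path neighborhood `N_∞(γ)`. -/
def NInf {k : ℕ} (d : Fin k → ℕ) (p : ℕ) (γ : ℝ) :
    Set ((Idx d → ℝ) × (Fin p → ℝ) × (Idx d → ℝ)) :=
  { z | inIntK z.1 ∧ inIntK z.2.2 ∧ dInf z.1 z.2.2 ≤ γ * muV z.1 z.2.2 }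

/-- The matrix `U_u` for a single block: zero first row and column and lower-right block
`(u_1 - β_u) P_u`, with `P_u` the projection onto the complement of the tail of `u`
(zero when the tail vanishes). -/
noncomputable def Ublk {m : ℕ} (u : Fin (m + 1) → ℝ) :
    Matrix (Fin (m + 1)) (Fin (m + 1)) ℝ :=
  Matrix.of fun j j' =>
    if j = 0 ∨ j' = 0 then 0
    else if tailNormSq u = 0 then 0
    else (u 0 - betaOf u) * ((if j = j' then (1 : ℝ) else 0) - u j * u j' / tailNormSq u)

/-- The block-diagonal matrix `U_x`. -/
noncomputable def UV {k : ℕ} {d : Fin k → ℕ} (x : Idx d → ℝ) :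
    Matrix (Idx d) (Idx d) ℝ :=
  Matrix.blockDiagonal' fun i => Ublk (blk x i)

/-- `Γ_p = 2 (γ²/2 + (1-ν)² k)^{1/2} / (1 - 3γ)`. -/
noncomputable def GammaP (γ ν : ℝ) (k : ℕ) : ℝ :=
  2 * Real.sqrt (γ ^ 2 / 2 + (1 - ν) ^ 2 * k) / (1 - 3 * γ)

/-- `Γ̃ = (4(γ² + δ²)/(1-3γ)²) (1 - δ/√(2k))⁻¹`. -/
noncomputable def GammaTilde (γ δ : ℝ) (k : ℕ) : ℝ :=
  4 * (γ ^ 2 + δ ^ 2) / (1 - 3 * γ) ^ 2 * (1 - δ / Real.sqrt (2 * k))⁻¹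

/-!
If a block `a` lies on the boundary of its cone, `‖ā‖ = |a₁|`, then for every `b` the Jordan
product satisfies `‖(a ∘ b)_{2:m}‖² - (a ∘ b)₁² = a₁² ‖b̄‖² - ⟨ā, b̄⟩² ≥ 0` by Cauchy–Schwarz,
so `a ∘ b` is not in the interior of the cone. Hence `x ∘ s ∈ int K` forces every block of `x`,
and by commutativity of `∘` every block of `s`, into the interior. For the second claim, a block
with `(w₁ - ν)² + ‖w̄‖² < ν² / 2` satisfies `ν - w₁ + ‖w̄‖ < ν` since `(p + q)² ≤ 2 (p² + q²)`.
-/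

def jblk {m : ℕ} (a b : Fin (m + 1) → ℝ) : Fin (m + 1) → ℝ :=
  fun j => if j = 0 then ∑ j', a j' * b j' else a 0 * b j + b 0 * a j

section Block

variable {m : ℕ}

lemma tailNormSq_nonneg (u : Fin (m + 1) → ℝ) : 0 ≤ tailNormSq u :=
  Finset.sum_nonneg fun _ _ => sq_nonneg _

lemma sq_tailNorm (u : Fin (m + 1) → ℝ) : tailNorm u ^ 2 = tailNormSq u :=
  Real.sq_sqrt (tailNormSq_nonneg u)

lemma sum_sq_eq_sq_add_tailNormSq (u : Fin (m + 1) → ℝ) :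
    ∑ j, u j ^ 2 = u 0 ^ 2 + tailNormSq u :=
  Fin.sum_univ_succ _

lemma jblk_zero (a b : Fin (m + 1) → ℝ) :
    jblk a b 0 = a 0 * b 0 + ∑ j : Fin m, a j.succ * b j.succ := by
  simp only [jblk, if_true, Fin.sum_univ_succ]

lemma tailNormSq_jblk (a b : Fin (m + 1) → ℝ) :
    tailNormSq (jblk a b) = a 0 ^ 2 * tailNormSq b + b 0 ^ 2 * tailNormSq a
      + 2 * a 0 * b 0 * ∑ j : Fin m, a j.succ * b j.succ := by
  simp only [tailNormSq, jblk, Fin.succ_ne_zero, if_false, Finset.mul_sum,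
    ← Finset.sum_add_distrib]
  exact Finset.sum_congr rfl fun j _ => by ring

lemma jblk_zero_le_tailNorm_of_tailNormSq_eq {a : Fin (m + 1) → ℝ}
    (ha : tailNormSq a = a 0 ^ 2) (b : Fin (m + 1) → ℝ) :
    jblk a b 0 ≤ tailNorm (jblk a b) := by
  have hCS : (∑ j : Fin m, a j.succ * b j.succ) ^ 2 ≤ tailNormSq a * tailNormSq b :=
    Finset.sum_mul_sq_le_sq_mul_sq _ _ _
  have hsq : jblk a b 0 ^ 2 ≤ tailNormSq (jblk a b) := by
    rw [jblk_zero, tailNormSq_jblk, ha]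
    rw [ha] at hCS
    nlinarith
  calc jblk a b 0 ≤ |jblk a b 0| := le_abs_self _
    _ = Real.sqrt (jblk a b 0 ^ 2) := (Real.sqrt_sq_eq_abs _).symm
    _ ≤ tailNorm (jblk a b) := Real.sqrt_le_sqrt hsq

end Block

section Blockwise

variable {k : ℕ} {d : Fin k → ℕ}

lemma blk_jmul (x s : Idx d → ℝ) (i : Fin k) :
    blk (jmul x s) i = jblk (blk x i) (blk s i) := by
  funext j
  simp only [blk, jmul, jblk]

lemma jmul_comm (x s : Idx d → ℝ) : jmul x s = jmul s x := by
  funext a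
  simp only [jmul]
  split
  · exact Finset.sum_congr rfl fun j _ => mul_comm _ _
  · ring

lemma inIntK_of_inIntK_jmul {x : Idx d → ℝ} (hx : inK x) (s : Idx d → ℝ)
    (h : inIntK (jmul x s)) : inIntK x := by
  intro i
  by_contra! hle
  have hsq : tailNormSq (blk x i) = blk x i 0 ^ 2 := by
    rw [← sq_tailNorm, le_antisymm (hx i) hle]
    rfl
  have hb := jblk_zero_le_tailNorm_of_tailNormSq_eq hsq (blk s i)
  rw [← blk_jmul] at hb
  exact (h i).not_ge hb

lemma sum_blk_sq_le_sum_sq (v : Idx d → ℝ) (i : Fin k) :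
    ∑ j, blk v i j ^ 2 ≤ ∑ a, v a ^ 2 := by
  rw [← Finset.univ_sigma_univ, Finset.sum_sigma]
  exact Finset.single_le_sum (f := fun i' => ∑ j, v ⟨i', j⟩ ^ 2)
    (fun _ _ => Finset.sum_nonneg fun _ _ => sq_nonneg _) (Finset.mem_univ i)

lemma tailNormSq_blk_sub_smul_unitE (w : Idx d → ℝ) (ν : ℝ) (i : Fin k) :
    tailNormSq (blk (w - ν • unitE) i) = tailNormSq (blk w i) := by
  simp [tailNormSq, blk, unitE, Fin.succ_ne_zero]

lemma inIntK_of_sqrt_two_mul_vnorm_sub_smul_unitE_lt {w : Idx d → ℝ} {ν : ℝ}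
    (h : Real.sqrt 2 * vnorm (w - ν • unitE) < ν) : inIntK w := by
  intro i
  have hν : 0 < ν := lt_of_le_of_lt (by unfold vnorm; positivity) h
  have hnorm : 2 * ∑ a, (w - ν • unitE : Idx d → ℝ) a ^ 2 < ν ^ 2 := by
    have := pow_lt_pow_left₀ h (by unfold vnorm; positivity) two_ne_zero
    rwa [mul_pow, Real.sq_sqrt zero_le_two, vnorm,
      Real.sq_sqrt (Finset.sum_nonneg fun _ _ => sq_nonneg _)] at this
  have hblock : (w ⟨i, 0⟩ - ν) ^ 2 + tailNorm (blk w i) ^ 2 ≤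
      ∑ a, (w - ν • unitE : Idx d → ℝ) a ^ 2 := by
    have := sum_blk_sq_le_sum_sq (w - ν • unitE) i
    rw [sum_sq_eq_sq_add_tailNormSq, tailNormSq_blk_sub_smul_unitE] at this
    simpa [sq_tailNorm, blk, unitE] using this
  nlinarith [sq_nonneg (w ⟨i, 0⟩ - ν + tailNorm (blk w i))]

end Blockwise

/-- Lemma 10: interior-point condition from the Jordan product. -/
theorem interior_from_jordan_product {k : ℕ} {d : Fin k → ℕ}
    (x s : Idx d → ℝ) (hx : inK x) (hs : inK s) :
    (inIntK (jmul x s) → inIntK x ∧ inIntK s) ∧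
    (∀ γ ν : ℝ, 0 < γ → γ < 1 → 0 < ν →
      Real.sqrt 2 * vnorm (jmul x s - ν • unitE) ≤ γ * ν →
      inIntK x ∧ inIntK s) := by
  have interior : inIntK (jmul x s) → inIntK x ∧ inIntK s := fun h =>
    ⟨inIntK_of_inIntK_jmul hx s h, inIntK_of_inIntK_jmul hs x (jmul_comm x s ▸ h)⟩
  refine ⟨interior, fun γ ν _ hγ hν hdist => interior ?_⟩
  exact inIntK_of_sqrt_two_mul_vnorm_sub_smul_unitE_lt
    (hdist.trans_lt (mul_lt_of_lt_one_left hν hγ))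

end SOCP
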